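/- Fix n odd and ε ∈ (0, 1/2). For all sufficiently large integers k, among balanced Boolean functions f: {0,1}^n → {0,1}, the quantity E[(T_ε f)^k] is maximized by the majority function Maj_n. -/

import Mathlib

open Finset

abbrev Cube (n : ℕ) := Fin n → ZMod 2

noncomputable def EE {n : ℕ} (f : Cube n → ℝ) : ℝ := (∑ x : Cube n, f x) / 2 ^ n

def W {n : ℕ} (A : Finset (Fin n)) (x : Cube n) : ℝ := (-1 : ℝ) ^ (∑ i ∈ A, (x i).val)

noncomputable def fhat {n : ℕ} (f : Cube n → ℝ) (A : Finset (Fin n)) : ℝ :=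
  EE (fun x => f x * W A x)

noncomputable def wt {n : ℕ} (ε : ℝ) (z : Cube n) : ℝ :=
  ∏ i, if z i = 0 then 1 - ε else ε

noncomputable def Tnoise {n : ℕ} (ε : ℝ) (f : Cube n → ℝ) (x : Cube n) : ℝ :=
  ∑ z : Cube n, wt ε z * f (x + z)

/-- The majority function: 1 iff more than half of the coordinates are 1. -/
noncomputable def Maj (n : ℕ) : Cube n → ℝ :=
  fun x => if n < 2 * ∑ i, (x i).val then 1 else 0

/-- Hamming distance. -/
def hamming {n : ℕ} (x y : Cube n) : ℕ :=
  (Finset.univ.filter fun i => x i ≠ y i).card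

/-!
Write `T_ε f(x) = ∑_{z ∈ S_x} wt(z)` with `S_x = {z | f(x + z) = 1}`; for balanced `f` every `S_x`
has `2^(n-1)` elements. Since `wt` decreases with the Hamming weight, the Hamming ball
`{z | 2|z| < n}` is the unique set of that size with the largest `wt`-mass `M = T_ε Maj(1⃗)`,
and every other one falls short by at least the gap between two adjacent middle levels.
So either some `S_x` is the ball, and `f` is a translate of `Maj_n`, with the same moments;
or `T_ε f ≤ c < M` everywhere, and then for large `k`
`E[(T_ε f)^k] ≤ c^k ≤ 2^{-n} M^k ≤ E[(T_ε Maj_n)^k]`.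
-/

open Finset Filter

lemma card_filter_add_left {G : Type*} [AddGroup G] [Fintype G] (p : G → Prop) [DecidablePred p]
    (x : G) : #{z | p (x + z)} = #{y | p y} :=
  card_equiv (Equiv.addLeft x) fun z => by simp

namespace Cube

variable {n : ℕ}

lemma add_self (v : Cube n) : v + v = 0 :=
  funext fun i => CharTwo.add_self_eq_zero (v i)

def weight (z : Cube n) : ℕ := ∑ i, (z i).val

lemma weight_add_one_add_weight (z : Cube n) : weight (z + 1) + weight z = n := by
  have hpt : ∀ a : ZMod 2, (a + 1).val + a.val = 1 := by decide
  simp only [weight, ← sum_add_distrib, Pi.add_apply, Pi.one_apply, hpt, sum_const, card_univ,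
    Fintype.card_fin, smul_eq_mul, mul_one]

lemma weight_le (z : Cube n) : weight z ≤ n := by
  have := weight_add_one_add_weight z
  omega

lemma weight_zero : weight (0 : Cube n) = 0 := by
  simp [weight]

lemma card_filter_eq_one (z : Cube n) : #{i | z i = 1} = weight z := by
  have hpt : ∀ a : ZMod 2, a.val = if a = 1 then 1 else 0 := by decide
  simp only [weight, hpt, sum_boole, Nat.cast_id]

lemma card_filter_eq_zero (z : Cube n) : #{i | z i = 0} = n - weight z := by
  have h := card_filter_add_card_filter_not (s := univ) fun i => z i = 0
  have hne : ∀ a : ZMod 2, ¬ a = 0 ↔ a = 1 := by decide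
  simp only [hne, card_filter_eq_one, card_univ, Fintype.card_fin] at h
  omega

def ball (n : ℕ) : Finset (Cube n) := {z | 2 * weight z < n}

lemma two_mul_card_ball (hn : Odd n) : 2 * #(ball n) = 2 ^ n := by
  have hcompl : #(ball n) = #{z : Cube n | ¬ 2 * weight z < n} := by
    refine card_equiv (Equiv.addRight 1) fun z => ?_
    have := weight_add_one_add_weight z
    obtain ⟨m, rfl⟩ := hn
    simp only [ball, mem_filter, mem_univ, true_and, Equiv.coe_addRight]
    omega
  have := card_filter_add_card_filter_not (s := (univ : Finset (Cube n))) fun z => 2 * weight z < n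
  rw [card_univ, Fintype.card_fun, ZMod.card, Fintype.card_fin] at this
  rw [← this, ← hcompl, two_mul]
  rfl

lemma Maj_add_one (z : Cube n) : Maj n (z + 1) = if 2 * weight z < n then 1 else 0 := by
  have := weight_add_one_add_weight z
  change (if n < 2 * weight (z + 1) then (1 : ℝ) else 0) = _
  congr 1
  exact propext (by omega)

end Cube

open Cube

section NoiseWeight

variable {n : ℕ} {ε : ℝ}

lemma wt_eq_pow (ε : ℝ) (z : Cube n) : wt ε z = ε ^ weight z * (1 - ε) ^ (n - weight z) := by
  have hne : ∀ a : ZMod 2, ¬ a = 0 ↔ a = 1 := by decide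
  rw [wt, prod_ite, prod_const, prod_const, mul_comm]
  simp only [hne, card_filter_eq_one, card_filter_eq_zero]

lemma wt_nonneg (hε₀ : 0 ≤ ε) (hε₁ : ε ≤ 1) (z : Cube n) : 0 ≤ wt ε z :=
  prod_nonneg fun i _ => by split_ifs <;> linarith

lemma wt_pos (hε₀ : 0 < ε) (hε₁ : ε < 1) (z : Cube n) : 0 < wt ε z :=
  prod_pos fun i _ => by split_ifs <;> linarith

lemma pow_mul_one_sub_pow_le_of_le (hε₀ : 0 ≤ ε) (hε : ε ≤ 1 - ε) {i j : ℕ} (hij : i ≤ j)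
    (hjn : j ≤ n) :
    ε ^ j * (1 - ε) ^ (n - j) ≤ ε ^ i * (1 - ε) ^ (n - i) := by
  obtain ⟨d, rfl⟩ := Nat.exists_eq_add_of_le hij
  rw [show n - i = d + (n - (i + d)) by omega, pow_add, pow_add, mul_assoc]
  have : 0 ≤ 1 - ε := by linarith
  gcongr

/-- The gap `ε ^ m * (1 - ε) ^ m * (1 - 2 * ε)` is `wt` of level `m` minus `wt` of level `m + 1`. -/
lemma sum_wt_add_gap_le (hε₀ : 0 ≤ ε) (hε : ε ≤ 1 - ε) {m : ℕ} {S : Finset (Cube (2 * m + 1))}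
    (hcard : #S = #(ball (2 * m + 1))) (hne : S ≠ ball (2 * m + 1)) :
    ∑ z ∈ S, wt ε z + ε ^ m * (1 - ε) ^ m * (1 - 2 * ε) ≤ ∑ z ∈ ball (2 * m + 1), wt ε z := by
  set B := ball (2 * m + 1)
  have hout : ∀ z ∈ S \ B, wt ε z ≤ ε ^ m * (1 - ε) ^ m * ε := by
    intro z hz
    simp only [B, ball, Finset.mem_sdiff, mem_filter, mem_univ, true_and] at hz
    have h := pow_mul_one_sub_pow_le_of_le hε₀ hε (n := 2 * m + 1) (by omega : m + 1 ≤ weight z)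
      (weight_le z)
    rw [wt_eq_pow]
    convert h using 1
    rw [show 2 * m + 1 - (m + 1) = m by omega]
    ring
  have hin : ∀ z ∈ B \ S, ε ^ m * (1 - ε) ^ m * (1 - ε) ≤ wt ε z := by
    intro z hz
    simp only [B, ball, Finset.mem_sdiff, mem_filter, mem_univ, true_and] at hz
    have h := pow_mul_one_sub_pow_le_of_le hε₀ hε (n := 2 * m + 1) (by omega : weight z ≤ m)
      (by omega)
    rw [wt_eq_pow]
    convert h using 1
    rw [show 2 * m + 1 - m = m + 1 by omega]
    ring
  have hA := sum_le_card_nsmul _ _ _ hout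
  have hB := card_nsmul_le_sum _ _ _ hin
  rw [card_sdiff_comm hcard.symm, nsmul_eq_mul] at hB
  rw [nsmul_eq_mul] at hA
  have hnonempty : (1 : ℝ) ≤ #(S \ B) := by
    have : (S \ B).Nonempty := sdiff_nonempty.mpr fun h => hne (eq_of_subset_of_card_le h hcard.ge)
    exact_mod_cast this.card_pos
  have hgap : 0 ≤ ε ^ m * (1 - ε) ^ m * (1 - 2 * ε) :=
    mul_nonneg (mul_nonneg (pow_nonneg hε₀ _) (pow_nonneg (by linarith) _)) (by linarith)
  have := mul_le_mul_of_nonneg_right hnonempty hgap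
  rw [← sum_inter_add_sum_sdiff S B, ← sum_inter_add_sum_sdiff B S, inter_comm]
  linarith

end NoiseWeight

section Expectation

variable {n : ℕ}

lemma EE_comp_add_right (F : Cube n → ℝ) (a : Cube n) : EE (fun x => F (x + a)) = EE F := by
  rw [EE, EE]
  congr 1
  exact Equiv.sum_comp (Equiv.addRight a) F

lemma EE_le_of_le {F : Cube n → ℝ} {c : ℝ} (h : ∀ x, F x ≤ c) : EE F ≤ c := by
  rw [EE, div_le_iff₀ (by positivity)]
  calc ∑ x, F x ≤ ∑ _x : Cube n, c := sum_le_sum fun x _ => h x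
    _ = c * 2 ^ n := by simp [mul_comm]

lemma div_le_EE {F : Cube n → ℝ} (h : ∀ x, 0 ≤ F x) (x : Cube n) : F x / 2 ^ n ≤ EE F :=
  div_le_div_of_nonneg_right (single_le_sum (fun y _ => h y) (mem_univ x)) (by positivity)

lemma two_mul_card_filter_eq_one {f : Cube n → ℝ} (hf : ∀ x, f x = 0 ∨ f x = 1)
    (hbal : EE f = 1 / 2) : 2 * #{y | f y = 1} = 2 ^ n := by
  have hsum : ∑ y, f y = #{y | f y = 1} := by
    rw [← sum_boole]
    exact sum_congr rfl fun y _ => by rcases hf y with h | h <;> simp [h]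
  rw [EE, hsum, div_eq_iff (by positivity)] at hbal
  exact_mod_cast (by linarith : (2 : ℝ) * #{y | f y = 1} = 2 ^ n)

end Expectation

section Noise

variable {n : ℕ} {ε : ℝ}

lemma Tnoise_nonneg (hε₀ : 0 ≤ ε) (hε₁ : ε ≤ 1) {f : Cube n → ℝ} (hf : ∀ x, 0 ≤ f x)
    (x : Cube n) : 0 ≤ Tnoise ε f x :=
  sum_nonneg fun z _ => mul_nonneg (wt_nonneg hε₀ hε₁ z) (hf _)

lemma Tnoise_eq_sum_filter {f : Cube n → ℝ} (hf : ∀ x, f x = 0 ∨ f x = 1) (x : Cube n) :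
    Tnoise ε f x = ∑ z ∈ {z | f (x + z) = 1}, wt ε z := by
  rw [Tnoise, sum_filter]
  refine sum_congr rfl fun z _ => ?_
  rcases hf (x + z) with h | h <;> simp [h]

lemma Tnoise_comp_add_right (g : Cube n → ℝ) (a x : Cube n) :
    Tnoise ε (fun y => g (y + a)) x = Tnoise ε g (x + a) := by
  simp only [Tnoise, add_right_comm x]

lemma Tnoise_Maj_one : Tnoise ε (Maj n) 1 = ∑ z ∈ ball n, wt ε z := by
  rw [Tnoise, ball, sum_filter]
  refine sum_congr rfl fun z _ => ?_
  rw [add_comm, Maj_add_one]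
  split_ifs <;> simp

lemma Tnoise_Maj_one_pos (hn : 0 < n) (hε₀ : 0 < ε) (hε₁ : ε < 1) : 0 < Tnoise ε (Maj n) 1 := by
  rw [Tnoise_Maj_one]
  exact sum_pos (fun z _ => wt_pos hε₀ hε₁ z) ⟨0, by simpa [ball, weight_zero]⟩

lemma eq_Maj_comp_add_of_filter_eq_ball {f : Cube n → ℝ} (hf : ∀ x, f x = 0 ∨ f x = 1)
    {x : Cube n} (hx : ({z | f (x + z) = 1} : Finset _) = ball n) :
    f = fun y => Maj n (y + (x + 1)) := by
  funext y
  have hxy : x + (x + y) = y := by rw [← add_assoc, add_self, zero_add]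
  have hmem : f y = 1 ↔ 2 * weight (x + y) < n := by
    simpa [ball, hxy] using congrArg (x + y ∈ ·) hx
  rw [show y + (x + 1) = x + y + 1 by abel, Maj_add_one]
  split_ifs with h
  · exact hmem.2 h
  · exact (hf y).resolve_right (mt hmem.1 h)

lemma EE_Tnoise_pow_eq_of_filter_eq_ball {f : Cube n → ℝ} (hf : ∀ x, f x = 0 ∨ f x = 1)
    {x : Cube n} (hx : ({z | f (x + z) = 1} : Finset _) = ball n) (k : ℕ) :
    EE (fun y => Tnoise ε f y ^ k) = EE (fun y => Tnoise ε (Maj n) y ^ k) := by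
  simp_rw [eq_Maj_comp_add_of_filter_eq_ball hf hx, Tnoise_comp_add_right]
  exact EE_comp_add_right (fun y => Tnoise ε (Maj n) y ^ k) _

lemma Tnoise_add_gap_le (hε₀ : 0 ≤ ε) (hε : ε ≤ 1 - ε) {m : ℕ} {f : Cube (2 * m + 1) → ℝ}
    (hf : ∀ x, f x = 0 ∨ f x = 1) (hbal : EE f = 1 / 2) {x : Cube (2 * m + 1)}
    (hx : ({z | f (x + z) = 1} : Finset _) ≠ ball (2 * m + 1)) :
    Tnoise ε f x + ε ^ m * (1 - ε) ^ m * (1 - 2 * ε) ≤ Tnoise ε (Maj (2 * m + 1)) 1 := by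
  have hcard : #{z | f (x + z) = 1} = #(ball (2 * m + 1)) := by
    rw [card_filter_add_left (fun y => f y = 1)]
    exact Nat.eq_of_mul_eq_mul_left two_pos
      ((two_mul_card_filter_eq_one hf hbal).trans (two_mul_card_ball ⟨m, rfl⟩).symm)
  rw [Tnoise_eq_sum_filter hf, Tnoise_Maj_one]
  exact sum_wt_add_gap_le hε₀ hε hcard hx

end Noise

lemma eventually_mul_pow_le_pow (C : ℝ) {c M : ℝ} (hc : 0 ≤ c) (hcM : c < M) :
    ∀ᶠ k in atTop, C * c ^ k ≤ M ^ k := by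
  have hM : 0 < M := hc.trans_lt hcM
  have hlim := (tendsto_pow_atTop_nhds_zero_of_lt_one (div_nonneg hc hM.le)
    ((div_lt_one hM).2 hcM)).const_mul C
  rw [mul_zero] at hlim
  filter_upwards [hlim.eventually (gt_mem_nhds one_pos)] with k hk
  rw [div_pow, mul_div_assoc', div_lt_one (by positivity)] at hk
  exact hk.le

/-- for n odd and ε fixed, for all sufficiently large k, the majority function
maximizes E[(T_ε f)^k] among balanced Boolean functions. -/
theorem majority_maximizes_high_moments (n : ℕ) (hodd : Odd n) (ε : ℝ)
    (hε₀ : 0 < ε) (hε₁ : ε < 1/2) :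
    ∃ K : ℕ, ∀ k : ℕ, K ≤ k →
      ∀ f : Cube n → ℝ, (∀ x, f x = 0 ∨ f x = 1) → EE f = 1/2 →
        EE (fun x => Tnoise ε f x ^ k) ≤ EE (fun x => Tnoise ε (Maj n) x ^ k) := by
  obtain ⟨m, rfl⟩ := hodd
  set M := Tnoise ε (Maj (2 * m + 1)) 1
  set δ := ε ^ m * (1 - ε) ^ m * (1 - 2 * ε)
  have hδ : 0 < δ := mul_pos (mul_pos (pow_pos hε₀ m) (pow_pos (by linarith) m)) (by linarith)
  have hM : 0 < M := Tnoise_Maj_one_pos (by omega) hε₀ (by linarith)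
  set c := max (M - δ) 0
  obtain ⟨K, hK⟩ := eventually_atTop.1 <| eventually_mul_pow_le_pow (2 ^ (2 * m + 1))
    (le_max_right (M - δ) 0) (max_lt (by linarith) hM)
  refine ⟨K, fun k hk f hf hbal => ?_⟩
  by_cases hshift : ∃ x, ({z | f (x + z) = 1} : Finset _) = ball (2 * m + 1)
  · obtain ⟨x, hx⟩ := hshift
    exact (EE_Tnoise_pow_eq_of_filter_eq_ball hf hx k).le
  have hTf (x : Cube (2 * m + 1)) : Tnoise ε f x ≤ c :=
    le_max_of_le_left <| le_sub_iff_add_le.2 <|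
      Tnoise_add_gap_le hε₀.le (by linarith) hf hbal fun hx => hshift ⟨x, hx⟩
  have hnonneg {g : Cube (2 * m + 1) → ℝ} (hg : ∀ x, 0 ≤ g x) (x) : 0 ≤ Tnoise ε g x :=
    Tnoise_nonneg hε₀.le (by linarith) hg x
  calc EE (fun x => Tnoise ε f x ^ k)
      ≤ c ^ k := EE_le_of_le fun x =>
        pow_le_pow_left₀ (hnonneg (fun y => by rcases hf y with h | h <;> simp [h]) x) (hTf x) k
    _ ≤ M ^ k / 2 ^ (2 * m + 1) := by
        rw [le_div_iff₀ (by positivity), mul_comm]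
        exact hK k hk
    _ ≤ EE (fun x => Tnoise ε (Maj _) x ^ k) :=
        div_le_EE (fun x => pow_nonneg (hnonneg (fun y => by unfold Maj; split_ifs <;> simp) x) k) 1
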